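/- (Counting m-full numbers.) Let m ≥ 2 be an integer. There exists a constant c > 0 such that the number of m-full positive integers k ≤ N is asymptotic to c · N^{1/m} as N → ∞; that is, #{k ∈ ℤ : 1 ≤ k ≤ N, and for every prime p, p ∣ k implies p^m ∣ k} / N^{1/m} → c. -/

import Mathlib

/-!
Reducing exponents modulo `m` writes every `m`-full `k` uniquely as `k = (a · rad b)^m · b` with
`a ≥ 1` and all prime exponents of `b` in `[1, m)`. For fixed `b` the admissible `a` with `k ≤ N`
are `1, …, ⌊N^{1/m} w(b)⌋`, where `w(b) = (b · rad(b)^m)^{-1/m}`, so by dominated convergence the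
count divided by `N^{1/m}` tends to `c = ∑_b w(b) ≥ w(1) = 1`. The series converges: splitting off
the primes of exponent exactly `j` writes `b = u^j v` with `u` squarefree and coprime to `v`, so
`w(b) = u^{-(1 + j/m)} w(v)`, and a downward induction on the least exponent `j` bounds the sum by
`∏_{1 ≤ j < m} ζ(1 + j/m)`.
-/

open Filter Finset UniqueFactorizationMonoid Topology

theorem tendsto_tsum_floor_mul_div {α ι : Type*} {l : Filter α} {T : α → ℝ}
    (hT : Tendsto T l atTop) {f : ι → ℝ} (hf : Summable f) (hf0 : 0 ≤ f) :
    Tendsto (fun x => ∑' i, (⌊T x * f i⌋₊ : ℝ) / T x) l (𝓝 (∑' i, f i)) := by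
  refine tendsto_tsum_of_dominated_convergence hf (fun i => ?_) ?_
  · exact ((tendsto_nat_floor_mul_div_atTop (hf0 i)).comp hT).congr fun x => by
      rw [Function.comp_apply, mul_comm]
  · filter_upwards [hT.eventually_gt_atTop 0] with x hx i
    rw [Real.norm_of_nonneg (by positivity), div_le_iff₀ hx, mul_comm]
    exact Nat.floor_le (mul_nonneg (hf0 i) hx.le)

namespace MFull

def IsFull (m k : ℕ) : Prop := ∀ p : ℕ, p.Prime → p ∣ k → p ^ m ∣ k

def withExponentsIn (s : Set ℕ) : Set ℕ :=
  {b | b ≠ 0 ∧ ∀ p ∈ b.primeFactors, b.factorization p ∈ s}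

noncomputable def fullOf (m a b : ℕ) : ℕ := (a * radical b) ^ m * b

noncomputable def weight (m b : ℕ) : ℝ := ((b * radical b ^ m : ℕ) : ℝ) ^ (-(1 / m : ℝ))

lemma weight_nonneg (m b : ℕ) : 0 ≤ weight m b := by
  unfold weight; positivity

lemma withExponentsIn_empty : withExponentsIn ∅ = {1} := by
  ext b
  simp only [withExponentsIn, Set.mem_empty_iff_false, imp_false, Set.mem_ofPred_eq,
    Set.mem_singleton_iff, ← Finset.eq_empty_iff_forall_notMem, Nat.primeFactors_eq_empty]
  omega

lemma one_mem_withExponentsIn (s : Set ℕ) : 1 ∈ withExponentsIn s :=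
  ⟨one_ne_zero, by simp⟩

lemma factorization_lt_of_mem_withExponentsIn {j m b : ℕ} (hm : 0 < m)
    (hb : b ∈ withExponentsIn (Set.Ico j m)) (p : ℕ) : b.factorization p < m := by
  by_cases hp : p ∈ b.primeFactors
  · exact (hb.2 p hp).2
  · rw [← Nat.support_factorization, Finsupp.notMem_support_iff] at hp
    rwa [hp]

lemma prod_pow_ne_zero_of_prime {f : ℕ →₀ ℕ} (hf : ∀ p ∈ f.support, p.Prime) : f.prod (· ^ ·) ≠ 0 :=
  Finsupp.prod_ne_zero_iff.2 fun p hp => pow_ne_zero _ (hf p hp).ne_zero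

theorem exists_pow_mul_of_mem_withExponentsIn {s : Set ℕ} {b : ℕ}
    (hb : b ∈ withExponentsIn s) (j : ℕ) :
    ∃ u v, v ∈ withExponentsIn (s \ {j}) ∧ b = u ^ j * v ∧ radical b = u * radical v := by
  classical
  obtain ⟨hb0, hbs⟩ := hb
  set f := b.factorization
  have hf : ∀ {g : ℕ →₀ ℕ}, g.support ⊆ f.support → ∀ p ∈ g.support, p.Prime :=
    fun hg p hp => Nat.prime_of_mem_primeFactors (hg hp)
  set v := (f.filter fun p => ¬f p = j).prod (· ^ ·)
  have hvf : v.factorization = f.filter fun p => ¬f p = j :=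
    Nat.prod_pow_factorization_eq_self
      (hf (by rw [Finsupp.support_filter]; exact filter_subset _ _))
  have hpfv : v.primeFactors = b.primeFactors.filter fun p => ¬f p = j := by
    rw [← Nat.support_factorization, hvf, Finsupp.support_filter, Nat.support_factorization]
  have hbuv : b = (∏ p ∈ b.primeFactors.filter fun p => f p = j, p) ^ j * v := by
    conv_lhs => rw [← Nat.prod_factorization_pow_eq_self hb0,
      ← Finsupp.prod_filter_mul_prod_filter_not fun p => f p = j]
    rw [← Finset.prod_pow, Finsupp.prod, Finsupp.support_filter, Nat.support_factorization]
    congr 1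
    refine Finset.prod_congr rfl fun p hp => ?_
    rw [Finsupp.filter_apply, if_pos (Finset.mem_filter.1 hp).2, (Finset.mem_filter.1 hp).2]
  refine ⟨_, v, ⟨right_ne_zero_of_mul (hbuv ▸ hb0), fun p hp => ?_⟩, hbuv, ?_⟩
  · rw [hpfv, Finset.mem_filter] at hp
    rw [hvf, Finsupp.filter_apply, if_pos hp.2]
    exact ⟨hbs p hp.1, hp.2⟩
  · rw [Nat.radical_eq_prod_primeFactors, Nat.radical_eq_prod_primeFactors, hpfv,
      Finset.prod_filter_mul_prod_filter_not]

lemma weight_eq_of_eq_pow_mul {m b u v j : ℕ} (hb : b = u ^ j * v)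
    (hrad : radical b = u * radical v) :
    weight m b = ((u ^ (j + m) : ℕ) : ℝ) ^ (-(1 / m : ℝ)) * weight m v := by
  have h : b * radical b ^ m = u ^ (j + m) * (v * radical v ^ m) := by
    rw [hrad, hb]; ring
  rw [weight, weight, h, Nat.cast_mul, Real.mul_rpow (by positivity) (by positivity)]

lemma summable_pow_add_rpow_neg_one_div {m j : ℕ} (hm : 0 < m) (hj : 0 < j) :
    Summable fun u : ℕ => ((u ^ (j + m) : ℕ) : ℝ) ^ (-(1 / m : ℝ)) := by
  have h (u : ℕ) :
      ((u ^ (j + m) : ℕ) : ℝ) ^ (-(1 / m : ℝ)) = (u : ℝ) ^ (-(1 + j / m : ℝ)) := by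
    rw [Nat.cast_pow, ← Real.rpow_natCast_mul (Nat.cast_nonneg _)]
    congr 1
    field_simp
    push_cast
    ring
  simp_rw [h]
  have hjm : (0 : ℝ) < j / m := by positivity
  exact Real.summable_nat_rpow.2 (by linarith)

lemma summable_indicator_weight_of_succ {m j : ℕ} (hm : 0 < m) (hj : 0 < j)
    (h : Summable ((withExponentsIn (Set.Ico (j + 1) m)).indicator (weight m))) :
    Summable ((withExponentsIn (Set.Ico j m)).indicator (weight m)) := by
  choose u v hv hb hrad using fun b : withExponentsIn (Set.Ico j m) =>
    exists_pow_mul_of_mem_withExponentsIn b.2 j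
  have hinj : Function.Injective fun b => (u b, v b) := fun b b' hbb' => by
    simp only [Prod.mk.injEq] at hbb'
    obtain ⟨hu, hv'⟩ := hbb'
    exact Subtype.ext (by rw [hb b, hb b', hu, hv'])
  rw [← summable_subtype_iff_indicator]
  refine (((summable_pow_add_rpow_neg_one_div hm hj).mul_of_nonneg h (fun _ => by positivity)
    (Set.indicator_nonneg fun _ _ => weight_nonneg _ _)).comp_injective hinj).congr fun b => ?_
  have hvb : v b ∈ withExponentsIn (Set.Ico (j + 1) m) := by
    have := hv b
    rw [Set.Ico_sdiff_left] at this
    exact this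
  simp only [Function.comp_apply, Set.indicator_of_mem hvb]
  exact (weight_eq_of_eq_pow_mul (hb b) (hrad b)).symm

theorem summable_indicator_weight {m j : ℕ} (hm : 0 < m) (hj : 0 < j) :
    Summable ((withExponentsIn (Set.Ico j m)).indicator (weight m)) := by
  induction h : m - j generalizing j with
  | zero =>
    rw [Set.Ico_eq_empty (by omega), withExponentsIn_empty]
    exact summable_of_ne_finset_zero (s := {1}) fun b hb =>
      Set.indicator_of_notMem (by simpa using hb) _
  | succ d ih => exact summable_indicator_weight_of_succ hm hj (ih (by omega) (by omega))

lemma isFull_fullOf (m a b : ℕ) : IsFull m (fullOf m a b) := by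
  intro p hp hpk
  rcases eq_or_ne b 0 with rfl | hb
  · simp [fullOf]
  have hpab : p ∣ a * radical b := by
    rcases (Nat.Prime.dvd_mul hp).1 hpk with h | h
    · exact hp.dvd_of_dvd_pow h
    · rw [Nat.radical_eq_prod_primeFactors]
      exact dvd_mul_of_dvd_right (dvd_prod_of_mem _ (Nat.mem_primeFactors.2 ⟨hp, h, hb⟩)) _
  exact dvd_mul_of_dvd_left (pow_dvd_pow_of_dvd hpab m) b

lemma fullOf_ne_zero (m : ℕ) {a b : ℕ} (ha : a ≠ 0) (hb : b ≠ 0) : fullOf m a b ≠ 0 := by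
  simp [fullOf, ha, hb]

lemma le_fullOf (m a : ℕ) {b : ℕ} (ha : a ≠ 0) : b ≤ fullOf m a b :=
  Nat.le_mul_of_pos_left b (pow_pos (Nat.mul_pos (Nat.pos_of_ne_zero ha) (Nat.radical_pos b)) m)

lemma factorization_eq_mod_of_mem_withExponentsIn {m a b : ℕ} (hm : 0 < m) (ha : a ≠ 0)
    (hb : b ∈ withExponentsIn (Set.Ico 1 m)) (p : ℕ) :
    b.factorization p = (fullOf m a b).factorization p % m := by
  rw [fullOf, Nat.factorization_mul (pow_ne_zero _ (by simp [ha])) hb.1, Nat.factorization_pow]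
  simp [Nat.mod_eq_of_lt (factorization_lt_of_mem_withExponentsIn hm hb p)]

theorem fullOf_injOn {m : ℕ} (hm : 0 < m) :
    Set.InjOn (fun q : ℕ × ℕ => fullOf m q.1 q.2)
      {q | q.1 ≠ 0 ∧ q.2 ∈ withExponentsIn (Set.Ico 1 m)} := by
  rintro ⟨a, b⟩ ⟨ha, hb⟩ ⟨a', b'⟩ ⟨ha', hb'⟩ (h : fullOf m a b = fullOf m a' b')
  obtain rfl : b = b' := Nat.eq_of_factorization_eq hb.1 hb'.1 fun p => by
    rw [factorization_eq_mod_of_mem_withExponentsIn hm ha hb,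
      factorization_eq_mod_of_mem_withExponentsIn hm ha' hb', h]
  have h' : (a * radical b) ^ m = (a' * radical b) ^ m :=
    Nat.eq_of_mul_eq_mul_right (Nat.pos_of_ne_zero hb.1) h
  rw [Nat.eq_of_mul_eq_mul_right (Nat.radical_pos b) (Nat.pow_left_injective hm.ne' h')]

theorem exists_fullOf_eq {m k : ℕ} (hm : 0 < m) (hk : k ≠ 0) (hfull : IsFull m k) :
    ∃ a b, a ≠ 0 ∧ b ∈ withExponentsIn (Set.Ico 1 m) ∧ fullOf m a b = k := by
  set f := k.factorization
  have hf : ∀ {g : ℕ → ℕ} (hg : g 0 = 0), ∀ p ∈ (f.mapRange g hg).support, p.Prime :=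
    fun _ _ hp => Nat.prime_of_mem_primeFactors
      (Nat.support_factorization k ▸ Finsupp.support_mapRange hp)
  set b := (f.mapRange (· % m) (Nat.zero_mod m)).prod (· ^ ·)
  set A := (f.mapRange (· / m) (Nat.zero_div m)).prod (· ^ ·)
  have hbf : b.factorization = f.mapRange (· % m) (Nat.zero_mod m) :=
    Nat.prod_pow_factorization_eq_self (hf _)
  have hAf : A.factorization = f.mapRange (· / m) (Nat.zero_div m) :=
    Nat.prod_pow_factorization_eq_self (hf _)
  have hb0 : b ≠ 0 := prod_pow_ne_zero_of_prime (hf _)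
  have hA0 : A ≠ 0 := prod_pow_ne_zero_of_prime (hf _)
  have hAb : A ^ m * b = k := Nat.eq_of_factorization_eq (by simp [hA0, hb0]) hk fun p => by
    simp [Nat.factorization_mul (pow_ne_zero m hA0) hb0, hAf, hbf, f, Nat.div_add_mod]
  have hradb : radical b ∣ A := by
    refine (Nat.radical_dvd_iff hA0).2 fun p hp => ?_
    rw [← Nat.support_factorization, hbf, Finsupp.mem_support_iff, Finsupp.mapRange_apply] at hp
    have hpk : p ∈ k.primeFactors := by
      rw [← Nat.support_factorization, Finsupp.mem_support_iff]
      exact fun h => hp (by rw [h, Nat.zero_mod])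
    have hmp : m ≤ f p := ((Nat.prime_of_mem_primeFactors hpk).pow_dvd_iff_le_factorization hk).1
      (hfull p (Nat.prime_of_mem_primeFactors hpk) (Nat.dvd_of_mem_primeFactors hpk))
    rw [← Nat.support_factorization, hAf, Finsupp.mem_support_iff, Finsupp.mapRange_apply]
    exact (Nat.div_pos hmp hm).ne'
  refine ⟨A / radical b, b, (Nat.div_pos (Nat.le_of_dvd (Nat.pos_of_ne_zero hA0) hradb)
    (Nat.radical_pos b)).ne', ⟨hb0, fun p hp => ?_⟩, ?_⟩
  · rw [← Nat.support_factorization, Finsupp.mem_support_iff] at hp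
    rw [hbf, Finsupp.mapRange_apply] at hp ⊢
    exact ⟨Nat.one_le_iff_ne_zero.2 hp, Nat.mod_lt _ hm⟩
  · rw [fullOf, Nat.div_mul_cancel hradb, hAb]

lemma fullOf_le_iff {m a b N : ℕ} (hm : 0 < m) (hb : b ≠ 0) :
    fullOf m a b ≤ N ↔ (a : ℝ) ≤ (N : ℝ) ^ ((1 : ℝ) / m) * weight m b := by
  have hC : (0 : ℝ) < ((b * radical b ^ m : ℕ) : ℝ) := by
    have := Nat.radical_pos b; positivity
  have h : fullOf m a b = a ^ m * (b * radical b ^ m) := by rw [fullOf]; ring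
  rw [h, weight, Real.rpow_neg hC.le, ← div_eq_mul_inv, ← Real.div_rpow (by positivity) hC.le,
    one_div, Real.le_rpow_inv_iff_of_pos (by positivity) (by positivity) (by positivity),
    Real.rpow_natCast, le_div_iff₀ hC, ← Nat.cast_pow, ← Nat.cast_mul, Nat.cast_le]

lemma le_floor_mul_indicator_weight_iff {m a b N : ℕ} (hm : 0 < m) (ha : a ≠ 0) :
    a ≤ ⌊(N : ℝ) ^ ((1 : ℝ) / m) * (withExponentsIn (Set.Ico 1 m)).indicator (weight m) b⌋₊ ↔
      b ∈ withExponentsIn (Set.Ico 1 m) ∧ fullOf m a b ≤ N := by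
  by_cases hb : b ∈ withExponentsIn (Set.Ico 1 m)
  · rw [Set.indicator_of_mem hb, Nat.le_floor_iff (by have := weight_nonneg m b; positivity),
      fullOf_le_iff hm hb.1]
    exact (and_iff_right hb).symm
  · simp [hb, ha]

lemma floor_mul_indicator_weight_eq_zero_of_lt {m b N : ℕ} (hm : 0 < m) (hb : N < b) :
    ⌊(N : ℝ) ^ ((1 : ℝ) / m) * (withExponentsIn (Set.Ico 1 m)).indicator (weight m) b⌋₊ = 0 := by
  by_contra h
  have := ((le_floor_mul_indicator_weight_iff hm one_ne_zero).1 (Nat.one_le_iff_ne_zero.2 h)).2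
  have := le_fullOf m 1 (b := b) one_ne_zero
  omega

theorem ncard_isFull_eq_sum_floor {m N : ℕ} (hm : 0 < m) :
    {k | 1 ≤ k ∧ k ≤ N ∧ IsFull m k}.ncard =
      ∑ b ∈ range (N + 1),
        ⌊(N : ℝ) ^ ((1 : ℝ) / m) * (withExponentsIn (Set.Ico 1 m)).indicator (weight m) b⌋₊ := by
  set x : ℕ → ℝ := fun b =>
    (N : ℝ) ^ ((1 : ℝ) / m) * (withExponentsIn (Set.Ico 1 m)).indicator (weight m) b
  set T := (range (N + 1)).sigma fun b => Icc 1 ⌊x b⌋₊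
  have hT : ∀ q ∈ T, q.2 ≠ 0 ∧ q.1 ∈ withExponentsIn (Set.Ico 1 m) ∧ fullOf m q.2 q.1 ≤ N := by
    intro q hq
    simp only [T, mem_sigma, mem_Icc] at hq
    exact ⟨by omega, (le_floor_mul_indicator_weight_iff hm (by omega)).1 hq.2.2⟩
  have hset : {k | 1 ≤ k ∧ k ≤ N ∧ IsFull m k} = T.image (fun q => fullOf m q.2 q.1) := by
    ext k
    simp only [Set.mem_ofPred_eq, coe_image, Set.mem_image, mem_coe]
    constructor
    · rintro ⟨hk1, hkN, hfull⟩
      obtain ⟨a, b, ha, hb, rfl⟩ := exists_fullOf_eq hm (by omega) hfull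
      refine ⟨⟨b, a⟩, ?_, rfl⟩
      simp only [T, mem_sigma, mem_range, mem_Icc]
      have := le_fullOf m a (b := b) ha
      exact ⟨by omega, by omega, (le_floor_mul_indicator_weight_iff hm ha).2 ⟨hb, hkN⟩⟩
    · rintro ⟨q, hq, rfl⟩
      obtain ⟨ha, hb, hle⟩ := hT q hq
      exact ⟨Nat.one_le_iff_ne_zero.2 (fullOf_ne_zero m ha hb.1), hle, isFull_fullOf m _ _⟩
  rw [hset, Set.ncard_coe_finset, card_image_of_injOn, card_sigma]
  · simp [x]
  · intro q hq q' hq' h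
    obtain ⟨ha, hb, -⟩ := hT q hq
    obtain ⟨ha', hb', -⟩ := hT q' hq'
    have := fullOf_injOn hm (x₁ := (q.2, q.1)) ⟨ha, hb⟩ (x₂ := (q'.2, q'.1)) ⟨ha', hb'⟩ h
    simp only [Prod.mk.injEq] at this
    exact Sigma.ext this.2 (heq_of_eq this.1)

end MFull

open MFull in
/-- **Counting m-full numbers.** Let `m ≥ 2`.  There is a constant `c > 0` such
that the number of `m`-full positive integers `k ≤ N` is asymptotic to `c · N^{1/m}` as
`N → ∞`; i.e. `#{k : 1 ≤ k ≤ N, ∀ p prime, p ∣ k → p^m ∣ k} / N^{1/m} → c`. -/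
theorem count_mFull_asymptotic (m : ℕ) (hm : 2 ≤ m) :
    ∃ c : ℝ, 0 < c ∧
      Tendsto (fun N : ℕ =>
          ({k : ℕ | 1 ≤ k ∧ k ≤ N ∧ ∀ p : ℕ, p.Prime → p ∣ k → p ^ m ∣ k}.ncard : ℝ) /
            (N : ℝ) ^ ((1 : ℝ) / m))
        atTop (nhds c) := by
  have hm0 : 0 < m := by omega
  set F := (withExponentsIn (Set.Ico 1 m)).indicator (weight m)
  have hF : Summable F := summable_indicator_weight hm0 one_pos
  have hF0 : 0 ≤ F := Set.indicator_nonneg fun b _ => weight_nonneg m b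
  have hF1 : F 1 = 1 := by simp [F, Set.indicator_of_mem (one_mem_withExponentsIn _), weight]
  refine ⟨∑' b, F b, hF.tsum_pos hF0 1 (by simp [hF1]), ?_⟩
  have hT : Tendsto (fun N : ℕ => (N : ℝ) ^ ((1 : ℝ) / m)) atTop atTop :=
    (tendsto_rpow_atTop (by positivity)).comp tendsto_natCast_atTop_atTop
  refine (tendsto_tsum_floor_mul_div hT hF hF0).congr fun N => ?_
  rw [tsum_eq_sum (s := range (N + 1)) fun b hb => by
    rw [floor_mul_indicator_weight_eq_zero_of_lt hm0 (by simpa using hb), Nat.cast_zero, zero_div]]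
  rw [← sum_div, ← Nat.cast_sum, ← ncard_isFull_eq_sum_floor hm0]
  rfl
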